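/- arXiv:1007.3021 — 2 statements merged into one kernel-verified Lean document; each statement's English description precedes it below -/
import Mathlib

section
/- The complement {0,1}* ∖ Dup of the language Dup of duplicated strings is not in 1C=LIN/lin; that is, for every finite advice alphabet Γ, every advice function h : ℕ → Γ* with |h(n)| = n, and every rational 1pfa M over the alphabet {0,1} × Γ, it is not the case that for all x ∈ {0,1}*: x ∉ Dup if and only if p_acc([x//h(|x|)]) = 1/2. Consequently, 1C=LIN/lin is not closed under complementation. -/
open scoped BigOperators

/-- A rational one-way probabilistic finite automaton over alphabet `Λ`
(with endmarker matrices `matC` for ¢ and `matD` for $). -/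
structure PFA (Λ : Type) where
  Q : Type
  fin : Fintype Q
  dec : DecidableEq Q
  start : Q
  final : Finset Q
  matC : Matrix Q Q ℚ
  matD : Matrix Q Q ℚ
  mat : Λ → Matrix Q Q ℚ
  nonnegC : ∀ i j, 0 ≤ matC i j
  nonnegD : ∀ i j, 0 ≤ matD i j
  nonnegMat : ∀ σ i j, 0 ≤ mat σ i j
  rowC : ∀ i, ∑ j ∈ fin.elems, matC i j = 1
  rowD : ∀ i, ∑ j ∈ fin.elems, matD i j = 1
  rowMat : ∀ σ i, ∑ j ∈ fin.elems, mat σ i j = 1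

/-- Acceptance probability of a 1pfa on an input string. -/
def PFA.accProb {Λ : Type} (M : PFA Λ) (x : List Λ) : ℚ :=
  letI := M.fin
  letI := M.dec
  ∑ q ∈ M.final,
    (Matrix.vecMul
      (x.foldl (fun v σ => Matrix.vecMul v (M.mat σ))
        (Matrix.vecMul (Pi.single M.start 1) M.matC))
      M.matD) q

/-- `D` is a probability distribution on `Γ^n`. -/
def IsDist {Γ : Type} [Fintype Γ] {n : ℕ} (D : List.Vector Γ n → ℝ) : Prop :=
  (∀ y, 0 ≤ D y) ∧ ∑ y, D y = 1

open Classical in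
/-- Probability, under randomized advice `D`, that the track string `[x//y]` lies in `L`. -/
noncomputable def randAccProb {Alp Γ : Type} [Fintype Γ] (L : Set (List (Alp × Γ)))
    {n : ℕ} (D : List.Vector Γ n → ℝ) (x : List Alp) : ℝ :=
  ∑ y : List.Vector Γ n, if x.zip y.toList ∈ L then D y else 0

/-- `S ∈ REG/n`. -/
def InREGn {Alp : Type} (S : Set (List Alp)) : Prop :=
  ∃ (Γ : Type) (_ : Fintype Γ) (h : ℕ → List Γ), (∀ n, (h n).length = n) ∧
    ∃ (Q : Type) (_ : Fintype Q) (M : DFA (Alp × Γ) Q),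
      ∀ x : List Alp, x ∈ S ↔ x.zip (h x.length) ∈ M.accepts

/-- `S ∈ REG/Rn` (bounded error, randomized advice). -/
def InREGRn {Alp : Type} (S : Set (List Alp)) : Prop :=
  ∃ (Γ : Type) (iΓ : Fintype Γ),
    letI := iΓ
    ∃ (Q : Type) (_ : Fintype Q) (M : DFA (Alp × Γ) Q) (ε : ℝ),
      0 ≤ ε ∧ ε < 1 / 2 ∧
        ∃ D : (n : ℕ) → List.Vector Γ n → ℝ, (∀ n, IsDist (D n)) ∧
          ∀ (n : ℕ) (x : List Alp), x.length = n →
            (x ∈ S → 1 - ε ≤ randAccProb M.accepts (D n) x) ∧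
            (x ∉ S → randAccProb M.accepts (D n) x ≤ ε)

/-- `S ∈ CFL/n`. -/
def InCFLn {Alp : Type} (S : Set (List Alp)) : Prop :=
  ∃ (Γ : Type) (_ : Fintype Γ) (h : ℕ → List Γ), (∀ n, (h n).length = n) ∧
    ∃ L : Language (Alp × Γ), L.IsContextFree ∧
      ∀ x : List Alp, x ∈ S ↔ x.zip (h x.length) ∈ L

/-- `S ∈ CFL/Rn` (bounded error, randomized advice). -/
def InCFLRn {Alp : Type} (S : Set (List Alp)) : Prop :=
  ∃ (Γ : Type) (iΓ : Fintype Γ),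
    letI := iΓ
    ∃ (L : Language (Alp × Γ)), L.IsContextFree ∧
      ∃ (ε : ℝ), 0 ≤ ε ∧ ε < 1 / 2 ∧
        ∃ D : (n : ℕ) → List.Vector Γ n → ℝ, (∀ n, IsDist (D n)) ∧
          ∀ (n : ℕ) (x : List Alp), x.length = n →
            (x ∈ S → 1 - ε ≤ randAccProb L (D n) x) ∧
            (x ∉ S → randAccProb L (D n) x ≤ ε)

/-- `A ∈ 1C=LIN/lin` via the paper's 1pfa characterization. -/
def InOneCeqLin {Alp : Type} (A : Set (List Alp)) : Prop :=
  ∃ (Γ : Type) (_ : Fintype Γ) (h : ℕ → List Γ), (∀ n, (h n).length = n) ∧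
    ∃ M : PFA (Alp × Γ),
      ∀ x : List Alp, x ∈ A ↔ M.accProb (x.zip (h x.length)) = 1 / 2

/-- `A ∈ 1PLIN/lin` via the paper's 1pfa characterization. -/
def InOnePLin {Alp : Type} (A : Set (List Alp)) : Prop :=
  ∃ (Γ : Type) (_ : Fintype Γ) (h : ℕ → List Γ), (∀ n, (h n).length = n) ∧
    ∃ M : PFA (Alp × Γ),
      ∀ x : List Alp, x ∈ A ↔ 1 / 2 < M.accProb (x.zip (h x.length))

open Classical in
/-- `(A, μ) ∈ aver-REG/n`. -/
def InAverREGn {Alp : Type} [Fintype Alp] (A : Set (List Alp))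
    (μ : (n : ℕ) → List.Vector Alp n → ℝ) : Prop :=
  ∃ (Γ : Type) (_ : Fintype Γ) (h : ℕ → List Γ), (∀ n, (h n).length = n) ∧
    ∃ (Q : Type) (_ : Fintype Q) (M : DFA (Alp × Γ) Q) (ε : ℝ),
      0 ≤ ε ∧ ε < 1 / 2 ∧
        ∀ n : ℕ, 1 - ε ≤ ∑ x : List.Vector Alp n,
          if (x.toList.zip (h n) ∈ M.accepts ↔ x.toList ∈ A) then μ n x else 0

/-- The language `Dup = {ww : w ∈ {0,1}*}`. -/
def Dup : Set (List Bool) := {z | ∃ w : List Bool, z = w ++ w}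

/-- The marked palindrome language `Pal_# = {w#w^R}` over the alphabet
`Option Bool` (with `none` playing the role of the marker `#`). -/
def PalHash : Set (List (Option Bool)) :=
  {z | ∃ w : List Bool, z = w.map some ++ none :: (w.reverse.map some)}

/-- Inner product (number of common `true` positions) of two bit strings. -/
def innerProd (u v : List Bool) : ℕ :=
  ((u.zip v).filter fun p => p.1 && p.2).length

/-- The language `IP_* = {axy : a ∈ {λ,0,1}, |x| = |y|, x^R ⊙ y ≡ 0 (mod 2)}`. -/
def IPstar : Language Bool :=
  {z | ∃ a x y : List Bool, (a = [] ∨ a = [false] ∨ a = [true]) ∧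
    z = a ++ x ++ y ∧ x.length = y.length ∧ innerProd x.reverse y % 2 = 0}

/-- A negligible function. -/
def Negligible (f : ℕ → ℝ) : Prop :=
  ∀ k : ℕ, 0 < k → ∃ N : ℕ, ∀ n ≥ N, f n ≤ 1 / (n : ℝ) ^ k

/-- `L` is `REG/n`-pseudorandom. -/
def RegPseudorandom {Alp : Type} [Fintype Alp] (L : Set (List Alp)) : Prop :=
  ∀ B : Set (List Alp), InREGn B →
    Negligible fun n =>
      |(((symmDiff B L) ∩ {x | x.length = n}).ncard : ℝ) /
        (Fintype.card Alp : ℝ) ^ n - 1 / 2|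


/-!
Lower bound: if a 1pfa with `d` states decides `Dupᶜ` with advice, split the inputs of length
`2m` into halves. The acceptance probability of `u v` is a bilinear form `α(u) ⬝ᵥ β(v)` with
`α(u), β(v) ∈ ℚᵈ`, and it equals `1/2` exactly when `u ≠ v`. Adding one coordinate turns
`α(u) ⬝ᵥ β(v) - 1/2` into a Gram matrix of vectors in `ℚᵈ⁺¹`, which is diagonal with nonzero
diagonal; hence `2 ^ m ≤ d + 1`, which fails for `m = d + 1`.

Upper bound: with advice marking the two halves of an even-length input, a 4-state 1pfa can
accept with probability `1/2 + val(u) - val(v)` for an injective binary encoding `val`.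
-/

open Matrix

theorem card_le_of_dotProduct_eq_iff_ne {K Q ι : Type*} [Field K] [Fintype Q] [Fintype ι]
    (u v : ι → Q → K) (c : K) (h : ∀ i j, u i ⬝ᵥ v j = c ↔ i ≠ j) :
    Fintype.card ι ≤ Fintype.card Q + 1 := by
  let u' : ι → Q ⊕ Unit → K := fun i => Sum.elim (u i) 1
  let v' : ι → Q ⊕ Unit → K := fun j => Sum.elim (v j) (-c • 1)
  have gram : ∀ i j, u' i ⬝ᵥ v' j = u i ⬝ᵥ v j - c := by
    intro i j
    simp [u', v', dotProduct, Fintype.sum_sum_type, sub_eq_add_neg]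
  have indep : LinearIndependent K u' := by
    refine Fintype.linearIndependent_iff.mpr fun g hg j => ?_
    have hj : ∑ i, g i * (u' i ⬝ᵥ v' j) = g j * (u' j ⬝ᵥ v' j) :=
      Finset.sum_eq_single j (fun i _ hij => by rw [gram, (h i j).mpr hij, sub_self, mul_zero])
        (by simp)
    have hzero : ∑ i, g i * (u' i ⬝ᵥ v' j) = 0 := by
      simpa [sum_dotProduct, smul_dotProduct] using congrArg (· ⬝ᵥ v' j) hg
    rw [hzero, gram, eq_comm, mul_eq_zero, sub_eq_zero] at hj
    exact hj.resolve_right (by simpa using h j j)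
  simpa [Module.finrank_fintype_fun_eq_card] using indep.fintype_card_le_finrank

attribute [local instance] PFA.fin PFA.dec

namespace PFA

variable {Λ : Type} (M : PFA Λ)

def stateDist (x : List Λ) : M.Q → ℚ :=
  x.foldl (fun v σ => v ᵥ* M.mat σ) (Pi.single M.start 1 ᵥ* M.matC)

def transitionMat (y : List Λ) : Matrix M.Q M.Q ℚ :=
  (y.map M.mat).prod

def acceptVec (y : List Λ) : M.Q → ℚ :=
  (M.transitionMat y * M.matD) *ᵥ fun q => if q ∈ M.final then 1 else 0

theorem accProb_eq (x : List Λ) :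
    M.accProb x = ∑ q ∈ M.final, (M.stateDist x ᵥ* M.matD) q := rfl

theorem foldl_vecMul_mat (y : List Λ) (v : M.Q → ℚ) :
    y.foldl (fun v σ => v ᵥ* M.mat σ) v = v ᵥ* M.transitionMat y := by
  induction y generalizing v with
  | nil => simp [transitionMat]
  | cons σ y ih => simp [ih, transitionMat, vecMul_vecMul]

theorem accProb_append (x y : List Λ) :
    M.accProb (x ++ y) = M.stateDist x ⬝ᵥ M.acceptVec y := by
  rw [accProb_eq, stateDist, List.foldl_append, ← stateDist, foldl_vecMul_mat, acceptVec,
    dotProduct_mulVec, vecMul_vecMul, dotProduct_comm, dotProduct]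
  simp [Finset.sum_ite_mem]

theorem card_le_of_accProb_eq_iff_ne {ι : Type} [Finite ι] (p s : ι → List Λ) (c : ℚ)
    (h : ∀ i j, M.accProb (p i ++ s j) = c ↔ i ≠ j) :
    Nat.card ι ≤ Nat.card M.Q + 1 := by
  have := Fintype.ofFinite ι
  simp only [Nat.card_eq_fintype_card]
  exact card_le_of_dotProduct_eq_iff_ne (fun i => M.stateDist (p i)) (fun j => M.acceptVec (s j))
    c fun i j => by rw [← accProb_append, h]

end PFA

theorem append_mem_dup_iff {w w' : List Bool} (h : w.length = w'.length) :
    w ++ w' ∈ Dup ↔ w = w' := by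
  constructor
  · rintro ⟨u, hu⟩
    have hu' : w.length = u.length := by
      have := congrArg List.length hu
      simp only [List.length_append] at this
      omega
    obtain ⟨rfl, rfl⟩ := List.append_inj hu hu'
    rfl
  · rintro rfl
    exact ⟨w, rfl⟩

theorem not_inOneCeqLin_compl_dup : ¬ InOneCeqLin Dupᶜ := by
  rintro ⟨Γ, _, h, hlen, M, hM⟩
  set m := Nat.card M.Q + 1
  set a := h (m + m)
  have ha : a.length = m + m := hlen _
  have fooling : ∀ w w' : List.Vector Bool m,
      M.accProb (w.toList.zip (a.take m) ++ w'.toList.zip (a.drop m)) = 1 / 2 ↔ w ≠ w' := by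
    intro w w'
    have hw := hM (w.toList ++ w'.toList)
    rw [List.length_append, List.Vector.toList_length, List.Vector.toList_length] at hw
    rw [← List.zip_append (by simp [ha]), List.take_append_drop, ← hw, Set.mem_compl_iff,
      append_mem_dup_iff (by simp), List.Vector.toList_injective.eq_iff]
  have hcard := M.card_le_of_accProb_eq_iff_ne _ _ _ fooling
  rw [Nat.card_eq_fintype_card, card_vector, Fintype.card_bool] at hcard
  exact Nat.lt_two_pow_self.not_ge hcard

def binStep (a : ℚ) (c : Bool) : ℚ := a / 2 + if c then 1 / 4 else 0

/-- Half the binary fraction `0.cₙ⋯c₁` of `l = c₁⋯cₙ` (the last bit is the most significant). -/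
def binVal (l : List Bool) : ℚ := l.foldl binStep 0

theorem foldl_binStep_mem_Ico (l : List Bool) {a : ℚ} (ha : a ∈ Set.Ico 0 (1 / 2)) :
    l.foldl binStep a ∈ Set.Ico 0 (1 / 2) := by
  induction l generalizing a with
  | nil => exact ha
  | cons c l ih =>
    refine ih ⟨?_, ?_⟩ <;> cases c <;> simp only [binStep] <;> norm_num <;> linarith [ha.1, ha.2]

theorem binVal_mem_Ico (l : List Bool) : binVal l ∈ Set.Ico 0 (1 / 2) :=
  foldl_binStep_mem_Ico l (by norm_num)

theorem binVal_concat (l : List Bool) (c : Bool) :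
    binVal (l ++ [c]) = binStep (binVal l) c := by
  simp [binVal]

theorem eq_of_binVal_eq {l l' : List Bool} (hlen : l.length = l'.length)
    (hval : binVal l = binVal l') : l = l' := by
  induction l using List.reverseRecOn generalizing l' with
  | nil => exact (List.length_eq_zero_iff.mp hlen.symm).symm
  | append_singleton l c ih =>
    obtain rfl | ⟨l', c', rfl⟩ := l'.eq_nil_or_concat'
    · simp at hlen
    rw [binVal_concat, binVal_concat, binStep, binStep] at hval
    have := binVal_mem_Ico l
    have := binVal_mem_Ico l'
    -- the last bit is read off as `binStep a c ≥ 1 / 4`, since `a / 2 < 1 / 4`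
    obtain rfl : c = c' := by
      cases c <;> cases c' <;> simp only [Set.mem_Ico] at * <;> norm_num at hval ⊢ <;> linarith
    rw [ih (by simpa using hlen) (by cases c <;> simpa using hval)]

namespace DupPFA

def state (a b : ℚ) : Fin 4 → ℚ := ![1 / 2 - a, a, 1 / 2 - b, b]

def readFirst (c : Bool) : Matrix (Fin 4) (Fin 4) ℚ :=
  if c then !![1 / 2, 1 / 2, 0, 0; 0, 1, 0, 0; 0, 0, 1, 0; 0, 0, 0, 1]
  else !![1, 0, 0, 0; 1 / 2, 1 / 2, 0, 0; 0, 0, 1, 0; 0, 0, 0, 1]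

def readSecond (c : Bool) : Matrix (Fin 4) (Fin 4) ℚ :=
  if c then !![1, 0, 0, 0; 0, 1, 0, 0; 0, 0, 1 / 2, 1 / 2; 0, 0, 0, 1]
  else !![1, 0, 0, 0; 0, 1, 0, 0; 0, 0, 1, 0; 0, 0, 1 / 2, 1 / 2]

def reject : Matrix (Fin 4) (Fin 4) ℚ :=
  !![1, 0, 0, 0; 1, 0, 0, 0; 1, 0, 0, 0; 1, 0, 0, 0]

def mat (σ : Bool × Fin 3) : Matrix (Fin 4) (Fin 4) ℚ :=
  ![readFirst σ.1, readSecond σ.1, reject] σ.2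

def init : Matrix (Fin 4) (Fin 4) ℚ := Matrix.of fun _ => state 0 0

theorem mat_nonneg (σ : Bool × Fin 3) (i j : Fin 4) : 0 ≤ mat σ i j := by
  obtain ⟨c, t⟩ := σ
  fin_cases t <;> cases c <;> fin_cases i <;> fin_cases j <;>
    norm_num [mat, readFirst, readSecond, reject]

theorem sum_mat (σ : Bool × Fin 3) (i : Fin 4) : ∑ j, mat σ i j = 1 := by
  obtain ⟨c, t⟩ := σ
  fin_cases t <;> cases c <;> fin_cases i <;>
    norm_num [mat, readFirst, readSecond, reject, Fin.sum_univ_four, cons_val_two, cons_val_three]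

theorem init_nonneg (i j : Fin 4) : 0 ≤ init i j := by
  fin_cases j <;> norm_num [init, state]

theorem sum_init (i : Fin 4) : ∑ j, init i j = 1 := by
  norm_num [init, state, Fin.sum_univ_four, cons_val_two, cons_val_three]

theorem sum_one (i : Fin 4) : ∑ j, (1 : Matrix (Fin 4) (Fin 4) ℚ) i j = 1 := by
  simp [one_apply]

theorem state_vecMul_readFirst (a b : ℚ) (c : Bool) :
    state a b ᵥ* readFirst c = state (binStep a c) b := by
  funext j
  cases c <;> fin_cases j <;>
    simp [state, readFirst, binStep, vecMul, dotProduct, Fin.sum_univ_four] <;> ring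

theorem state_vecMul_readSecond (a b : ℚ) (c : Bool) :
    state a b ᵥ* readSecond c = state a (binStep b c) := by
  funext j
  cases c <;> fin_cases j <;>
    simp [state, readSecond, binStep, vecMul, dotProduct, Fin.sum_univ_four] <;> ring

theorem vecMul_reject (v : Fin 4 → ℚ) : v ᵥ* reject = Pi.single 0 (∑ i, v i) := by
  funext j
  fin_cases j <;> simp [reject, vecMul, dotProduct, Fin.sum_univ_four]

end DupPFA

open DupPFA

/-- Two registers `{0, 1}` and `{2, 3}` of mass `1/2` each; advice tag `0` (`1`) makes the first
(second) register accumulate `binVal` of its bits in state `1` (`3`), and tag `2` flushes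
everything to the rejecting state `0`. -/
abbrev dupPFA : PFA (Bool × Fin 3) where
  Q := Fin 4
  fin := inferInstance
  dec := inferInstance
  start := 0
  final := {1, 2}
  matC := init
  matD := 1
  mat := mat
  nonnegC := init_nonneg
  nonnegD := fun i j => by simp only [one_apply]; split_ifs <;> norm_num
  nonnegMat := mat_nonneg
  rowC := sum_init
  rowD := sum_one
  rowMat := sum_mat

theorem dupPFA_stateDist_halves (w w' : List Bool) :
    dupPFA.stateDist (w.map (·, 0) ++ w'.map (·, 1)) = state (binVal w) (binVal w') := by
  have hinit : Pi.single (0 : Fin 4) 1 ᵥ* init = state 0 0 := single_one_vecMul _ _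
  rw [PFA.stateDist, hinit, List.foldl_append, List.foldl_map, List.foldl_map,
    List.foldl_hom (fun a => state a 0) fun a c => state_vecMul_readFirst a 0 c,
    List.foldl_hom (state (w.foldl binStep 0)) fun b c => state_vecMul_readSecond _ b c]
  rfl

theorem dupPFA_accProb_halves (w w' : List Bool) :
    dupPFA.accProb (w.map (·, 0) ++ w'.map (·, 1)) = 1 / 2 + binVal w - binVal w' := by
  rw [PFA.accProb_eq, dupPFA_stateDist_halves, vecMul_one, Finset.sum_pair (by decide)]
  simp [state]
  ring

theorem dupPFA_accProb_reject (l : List (Bool × Fin 3)) (c : Bool) :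
    dupPFA.accProb (l ++ [(c, 2)]) = 0 := by
  rw [PFA.accProb_eq, PFA.stateDist, List.foldl_append, List.foldl_cons, List.foldl_nil,
    ← PFA.stateDist]
  change ∑ q ∈ {1, 2}, (_ ᵥ* reject ᵥ* 1) q = 0
  rw [vecMul_reject, vecMul_one, Finset.sum_pair (by decide)]
  simp

def dupAdvice (n : ℕ) : List (Fin 3) :=
  if Even n then List.replicate (n / 2) 0 ++ List.replicate (n / 2) 1 else List.replicate n 2

theorem length_dupAdvice (n : ℕ) : (dupAdvice n).length = n := by
  unfold dupAdvice
  split_ifs with h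
  · obtain ⟨k, rfl⟩ := h
    simp only [List.length_append, List.length_replicate]
    omega
  · exact List.length_replicate

theorem zip_replicate_length {α β : Type*} (l : List α) (b : β) :
    l.zip (List.replicate l.length b) = l.map (·, b) := by
  induction l with
  | nil => rfl
  | cons a l ih => simp [List.replicate_succ, ih]

theorem inOneCeqLin_dup : InOneCeqLin Dup := by
  refine ⟨Fin 3, inferInstance, dupAdvice, length_dupAdvice, dupPFA, fun x => ?_⟩
  rcases Nat.even_or_odd x.length with ⟨m, hm⟩ | hodd
  · obtain ⟨w, w', rfl, hw, hw'⟩ : ∃ w w', x = w ++ w' ∧ w.length = m ∧ w'.length = m :=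
      ⟨x.take m, x.drop m, (List.take_append_drop m x).symm, by simp; omega, by simp; omega⟩
    have hadv : dupAdvice (w ++ w').length = List.replicate m 0 ++ List.replicate m 1 := by
      rw [hm, dupAdvice, if_pos ⟨m, rfl⟩, show (m + m) / 2 = m by omega]
    rw [hadv, List.zip_append (by simp [hw]), ← hw, zip_replicate_length, hw, ← hw',
      zip_replicate_length, dupPFA_accProb_halves, append_mem_dup_iff (hw.trans hw'.symm)]
    constructor
    · rintro rfl
      ring
    · intro h
      exact eq_of_binVal_eq (hw.trans hw'.symm) (by linarith)
  · have hx : x ∉ Dup := by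
      rintro ⟨w, rfl⟩
      exact Nat.not_odd_iff_even.mpr ⟨_, List.length_append⟩ hodd
    obtain ⟨l, c, rfl⟩ : ∃ l c, x = l ++ [c] :=
      x.eq_nil_or_concat'.resolve_left (by rintro rfl; simp at hodd)
    rw [dupAdvice, if_neg (Nat.not_even_iff_odd.mpr hodd), zip_replicate_length, List.map_append,
      List.map_singleton, dupPFA_accProb_reject]
    simp [hx]

theorem stmt3 : ¬ InOneCeqLin Dupᶜ ∧
    ∃ A : Set (List Bool), InOneCeqLin A ∧ ¬ InOneCeqLin Aᶜ :=
  ⟨not_inOneCeqLin_compl_dup, Dup, inOneCeqLin_dup, not_inOneCeqLin_compl_dup⟩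
end

section
/- The marked palindrome language Pal_# belongs to REG/Rn, and in fact with error bound ε = 1/4: there exist a finite advice alphabet Γ, a DFA M over {0,1,#} × Γ, and, for each n, a probability distribution D_n on Γ^n such that for every x ∈ {0,1,#}^n: if x ∈ Pal_# then Pr_{y∼D_n}[M accepts [x//y]] ≥ 3/4, and if x ∉ Pal_# then Pr_{y∼D_n}[M accepts [x//y]] ≤ 1/4. -/
open scoped BigOperators

/-!
Advice for length `2m + 1` is `r # rᴿ` with `r` uniform in `Gᵐ` for a finite abelian group `G`
(`G = ZMod 4` in the end). Reading `w # v`, the automaton insists that the marker sits under the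
blank of the advice and adds up the `rᵢ` under the `1`s, negating the running sum at the marker;
it ends with `⟨vᴿ, r⟩ - ⟨w, r⟩`, where `⟨w, r⟩ = ∑_{wᵢ = 1} rᵢ`, and accepts iff this is `0`.
For `v = wᴿ` that happens for every `r`. Otherwise `w` and `vᴿ` differ at some `i`, the difference
is `± rᵢ` plus a term independent of `rᵢ`, so it vanishes for exactly a `1/|G|` fraction of the
`r`. Even lengths, where `Pal_#` has no words, get all-blank advice, which the automaton rejects.
-/

open Finset

section UniformPushforward

variable {R Γ : Type} [Fintype R] [Fintype Γ] {n : ℕ}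

open Classical in
noncomputable def uniformPushforward (e : R → List.Vector Γ n) (y : List.Vector Γ n) : ℝ :=
  #{r | e r = y} / Fintype.card R

lemma isDist_uniformPushforward [Nonempty R] (e : R → List.Vector Γ n) :
    IsDist (uniformPushforward e) := by
  classical
  refine ⟨fun y => by unfold uniformPushforward; positivity, ?_⟩
  simp only [uniformPushforward, ← sum_div]
  rw [← Nat.cast_sum, ← card_eq_sum_card_fiberwise fun _ _ => mem_univ _, card_univ,
    div_self (by exact_mod_cast Fintype.card_ne_zero)]

open Classical in
lemma randAccProb_uniformPushforward {Alp : Type} (L : Language (Alp × Γ))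
    (e : R → List.Vector Γ n) (x : List Alp) :
    randAccProb L (uniformPushforward e) x = #{r | x.zip (e r).toList ∈ L} / Fintype.card R := by
  have hfiber : ∀ y, (if x.zip y.toList ∈ L then uniformPushforward e y else 0) =
      ∑ r with e r = y, if x.zip (e r).toList ∈ L then (Fintype.card R : ℝ)⁻¹ else 0 := by
    intro y
    rw [sum_congr rfl fun r hr => by rw [(mem_filter.1 hr).2], sum_const,
      uniformPushforward]
    split_ifs <;> simp [div_eq_mul_inv]
  calc randAccProb L (uniformPushforward e) x
      = ∑ y, ∑ r with e r = y, if x.zip (e r).toList ∈ L then (Fintype.card R : ℝ)⁻¹ else 0 :=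
        sum_congr rfl fun y _ => hfiber y
    _ = #{r | x.zip (e r).toList ∈ L} / Fintype.card R := by
      rw [sum_fiberwise, card_filter, Nat.cast_sum, sum_div]
      simp [div_eq_mul_inv]

end UniformPushforward

section Fingerprint

variable {G : Type} [AddCommMonoid G]

def fingerprint (w : List Bool) (r : List G) : G :=
  (List.zipWith (fun b g => if b then g else 0) w r).sum

@[simp] lemma fingerprint_nil_left (r : List G) : fingerprint [] r = 0 := by
  simp [fingerprint]

@[simp] lemma fingerprint_cons_cons (b : Bool) (w : List Bool) (g : G) (r : List G) :
    fingerprint (b :: w) (g :: r) = (if b then g else 0) + fingerprint w r := by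
  simp [fingerprint]

lemma fingerprint_reverse {w : List Bool} {r : List G} (h : w.length = r.length) :
    fingerprint w.reverse r.reverse = fingerprint w r := by
  rw [fingerprint, ← List.reverse_zipWith h, List.sum_reverse, fingerprint]

end Fingerprint

theorem card_fingerprint_eq_mul_card {G : Type} [AddCommGroup G] [Fintype G] [DecidableEq G] :
    ∀ {m : ℕ} {w u : List Bool}, w.length = m → u.length = m → w ≠ u →
      #{r : Fin m → G | fingerprint w (List.ofFn r) = fingerprint u (List.ofFn r)} *
        Fintype.card G = Fintype.card G ^ m
  | 0, [], [], _, _, hne => absurd rfl hne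
  | m + 1, a :: w, b :: u, hw, hu, hne => by
      simp only [List.length_cons, Nat.add_right_cancel_iff] at hw hu
      rw [card_filter, ← (Fin.consEquiv fun _ => G).sum_comp, Fintype.sum_prod_type, sum_comm]
      simp only [Fin.consEquiv_apply, List.ofFn_succ, Fin.cons_zero, Fin.cons_succ,
        fingerprint_cons_cons]
      by_cases hab : a = b
      · subst hab
        have hwu : w ≠ u := fun h => hne (h ▸ rfl)
        simp only [add_right_inj, sum_const, card_univ, smul_eq_mul]
        rw [← mul_sum, ← card_filter, pow_succ', ← card_fingerprint_eq_mul_card hw hu hwu]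
        ring
      · have hunique (c d : G) :
            ∑ g : G, (if (if a then g else 0) + c = (if b then g else 0) + d then 1 else 0) = 1 := by
          cases a <;> cases b <;> simp only [Bool.false_eq_true, if_true, if_false, zero_add,
            eq_comm (a := c), ← eq_sub_iff_add_eq, sum_ite_eq', mem_univ] <;> simp at hab
        simp only [hunique, sum_const, card_univ, Fintype.card_fun, Fintype.card_fin, smul_eq_mul,
          mul_one, pow_succ]

section PalDFA

variable (G : Type) [AddCommGroup G]

/-- `none` is a dead state; `some (seenMarker, s)` carries the running sum `s`. -/
def palDFA : DFA (Option Bool × Option G) (Option (Bool × G)) where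
  step
    | some (ph, p), (some b, some g) => some (ph, p + if b then g else 0)
    | some (false, p), (none, none) => some (true, -p)
    | _, _ => none
  start := some (false, 0)
  accept := {some (true, 0)}

variable {G}

def palAdvice (r : List G) : List (Option G) := r.map some ++ none :: r.reverse.map some

@[simp] lemma palDFA_start : (palDFA G).start = some (false, 0) := rfl

@[simp] lemma mem_palDFA_accept {q : Option (Bool × G)} :
    q ∈ (palDFA G).accept ↔ q = some (true, 0) := Iff.rfl

@[simp] lemma palDFA_step_none (σ : Option Bool × Option G) : (palDFA G).step none σ = none := rfl

@[simp] lemma palDFA_step_bit (ph b : Bool) (p g : G) :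
    (palDFA G).step (some (ph, p)) (some b, some g) = some (ph, p + if b then g else 0) := rfl

@[simp] lemma palDFA_step_marker (p : G) :
    (palDFA G).step (some (false, p)) (none, none) = some (true, -p) := rfl

@[simp] lemma palDFA_step_none_some (q : Option (Bool × G)) (g : G) :
    (palDFA G).step q (none, some g) = none := by
  rcases q with _ | ⟨_ | _, _⟩ <;> rfl

@[simp] lemma palDFA_step_some_none (q : Option (Bool × G)) (b : Bool) :
    (palDFA G).step q (some b, none) = none := by
  rcases q with _ | ⟨_ | _, _⟩ <;> rfl

@[simp] lemma palDFA_evalFrom_none (l : List (Option Bool × Option G)) :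
    (palDFA G).evalFrom none l = none := by
  induction l with
  | nil => rfl
  | cons σ l ih => exact ih

lemma palDFA_evalFrom_zip_eq_some {ph : Bool} {s : Bool × G} :
    ∀ {A : List (Option Bool)} {r : List G} {p : G}, A.length = r.length →
      ((palDFA G).evalFrom (some (ph, p)) (A.zip (r.map some)) = some s ↔
        ∃ w, A = w.map some ∧ s = (ph, p + fingerprint w r))
  | [], [], p, _ => by
      simp only [List.zip_nil_left, DFA.evalFrom_nil, Option.some.injEq]
      constructor
      · rintro rfl
        exact ⟨[], rfl, by simp⟩
      · rintro ⟨_ | _, ⟨⟩, rfl⟩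
        simp
  | none :: A, g :: r, p, _ => by
      simp only [List.map_cons, List.zip_cons_cons, DFA.evalFrom_cons, palDFA_step_none_some,
        palDFA_evalFrom_none, reduceCtorEq, false_iff]
      rintro ⟨_ | _, ⟨⟩, -⟩
  | some b :: A, g :: r, p, h => by
      simp only [List.map_cons, List.zip_cons_cons, DFA.evalFrom_cons, palDFA_step_bit,
        palDFA_evalFrom_zip_eq_some (Nat.succ_injective h)]
      constructor
      · rintro ⟨w, rfl, rfl⟩
        exact ⟨b :: w, rfl, by simp [add_assoc]⟩
      · rintro ⟨_ | ⟨b', w⟩, ⟨⟩, rfl⟩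
        exact ⟨w, rfl, by simp [add_assoc]⟩

lemma palDFA_accepts_zip_palAdvice_iff {A B : List (Option Bool)} {c : Option Bool} {r : List G}
    (hA : A.length = r.length) (hB : B.length = r.length) :
    (A ++ c :: B).zip (palAdvice r) ∈ (palDFA G).accepts ↔
      ∃ w u : List Bool, A = w.map some ∧ c = none ∧ B = u.reverse.map some ∧
        fingerprint w r = fingerprint u r := by
  have hB' : B.length = r.reverse.length := by simpa using hB
  rw [DFA.mem_accepts, palAdvice, List.zip_append (by simpa using hA), List.zip_cons_cons,
    DFA.eval, DFA.evalFrom_of_append, DFA.evalFrom_cons, palDFA_start, mem_palDFA_accept]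
  constructor
  · intro h
    obtain ⟨q, hq⟩ : ∃ q, (palDFA G).evalFrom (some (false, 0)) (A.zip (r.map some)) = some q :=
      Option.ne_none_iff_exists'.1 fun h0 => by simp [h0] at h
    obtain ⟨w, rfl, rfl⟩ := (palDFA_evalFrom_zip_eq_some hA).1 hq
    rcases c with _ | b
    · rw [hq, palDFA_step_marker] at h
      obtain ⟨v, rfl, hv⟩ := (palDFA_evalFrom_zip_eq_some hB').1 h
      refine ⟨w, v.reverse, rfl, rfl, by simp, ?_⟩
      rw [← fingerprint_reverse (w := v.reverse) (by simpa using hB), List.reverse_reverse]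
      simpa [neg_add_eq_zero, eq_comm] using hv
    · simp [hq] at h
  · rintro ⟨w, u, rfl, rfl, rfl, h⟩
    rw [(palDFA_evalFrom_zip_eq_some hA).2 ⟨w, rfl, rfl⟩, palDFA_step_marker,
      (palDFA_evalFrom_zip_eq_some hB').2 ⟨u.reverse, rfl, rfl⟩]
    rw [fingerprint_reverse (by simpa using hB), h]
    simp

lemma palDFA_not_accepts_zip_replicate_none :
    ∀ {x : List (Option Bool)}, Even x.length →
      x.zip (List.replicate x.length none) ∉ (palDFA G).accepts
  | [], _ => by simp [DFA.mem_accepts, DFA.eval]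
  | [_], h => by simp at h
  | a :: b :: x, _ => by
      have hdead :
          (palDFA G).step ((palDFA G).step (some (false, 0)) (a, none)) (b, none) = none := by
        rcases a with _ | _ <;> rcases b with _ | _ <;> rfl
      simp [DFA.mem_accepts, DFA.eval, List.replicate_succ, DFA.evalFrom_cons, hdead]

end PalDFA

section PalAdvice

variable {G : Type}

def palAdviceVec (n : ℕ) (r : Fin (n / 2) → G) : List.Vector (Option G) n :=
  ⟨if Odd n then palAdvice (List.ofFn r) else List.replicate n none, by
    split_ifs with hn
    · obtain ⟨k, rfl⟩ := hn
      simp [palAdvice]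
      omega
    · simp⟩

lemma palAdviceVec_toList_of_odd {n : ℕ} (hn : Odd n) (r : Fin (n / 2) → G) :
    (palAdviceVec n r).toList = palAdvice (List.ofFn r) :=
  if_pos hn

lemma palAdviceVec_toList_of_even {n : ℕ} (hn : ¬Odd n) (r : Fin (n / 2) → G) :
    (palAdviceVec n r).toList = List.replicate n none :=
  if_neg hn

variable (G) [Fintype G]

noncomputable def palDist (n : ℕ) : List.Vector (Option G) n → ℝ :=
  uniformPushforward (palAdviceVec (G := G) n)

variable {G} [AddCommGroup G]

lemma randAccProb_palDist_of_mem {n : ℕ} {x : List (Option Bool)} (hx : x ∈ PalHash)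
    (hn : x.length = n) : randAccProb (palDFA G).accepts (palDist G n) x = 1 := by
  obtain ⟨w, rfl⟩ := hx
  have hlen : w.length + (w.length + 1) = n := by simpa using hn
  have hw : w.length = n / 2 := by omega
  have hodd : Odd n := ⟨w.length, by omega⟩
  classical
  rw [palDist, randAccProb_uniformPushforward, filter_true_of_mem, card_univ,
    div_self (by exact_mod_cast Fintype.card_ne_zero)]
  intro r _
  rw [palAdviceVec_toList_of_odd hodd, palDFA_accepts_zip_palAdvice_iff (by simpa using hw)
    (by simpa using hw)]
  exact ⟨w, w, rfl, rfl, rfl, rfl⟩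

open Classical in
lemma card_palAdvice_accepted_mul_card_le {k : ℕ} {x : List (Option Bool)} (hx : x ∉ PalHash)
    (hlen : x.length = 2 * k + 1) :
    #{r : Fin k → G | x.zip (palAdvice (List.ofFn r)) ∈ (palDFA G).accepts} * Fintype.card G ≤
      Fintype.card G ^ k := by
  obtain ⟨A, c, B, rfl, hA, hB⟩ : ∃ A c B, x = A ++ c :: B ∧ A.length = k ∧ B.length = k :=
    ⟨x.take k, x[k], x.drop (k + 1), by rw [← List.drop_eq_getElem_cons, List.take_append_drop],
      by simp; omega, by simp; omega⟩
  have hAr (r : Fin k → G) : A.length = (List.ofFn r).length := by rw [hA, List.length_ofFn]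
  have hBr (r : Fin k → G) : B.length = (List.ofFn r).length := by rw [hB, List.length_ofFn]
  by_cases hshape : ∃ w u : List Bool, A = w.map some ∧ c = none ∧ B = u.reverse.map some
  · obtain ⟨w, u, rfl, rfl, rfl⟩ := hshape
    have hw : w.length = k := by simpa using hA
    have hu : u.length = k := by simpa using hB
    have hwu : w ≠ u := by
      rintro rfl
      exact hx ⟨w, rfl⟩
    rw [← card_fingerprint_eq_mul_card hw hu hwu]
    refine Nat.mul_le_mul_right _ (card_le_card fun r => ?_)
    simp only [mem_filter, mem_univ, true_and]
    rw [palDFA_accepts_zip_palAdvice_iff (hAr r) (hBr r)]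
    rintro ⟨w', u', hw', -, hu', h⟩
    rwa [List.map_injective_iff.2 (Option.some_injective _) hw', List.reverse_injective
      (List.map_injective_iff.2 (Option.some_injective _) hu')]
  · rw [filter_false_of_mem, card_empty, zero_mul]
    · exact Nat.zero_le _
    intro r _ h
    rw [palDFA_accepts_zip_palAdvice_iff (hAr r) (hBr r)] at h
    obtain ⟨w, u, hw, hc, hu, -⟩ := h
    exact hshape ⟨w, u, hw, hc, hu⟩

lemma randAccProb_palDist_le_of_not_mem {n : ℕ} {x : List (Option Bool)} (hx : x ∉ PalHash)
    (hn : x.length = n) :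
    randAccProb (palDFA G).accepts (palDist G n) x ≤ 1 / Fintype.card G := by
  classical
  have hG : (0 : ℝ) < Fintype.card G := by exact_mod_cast Fintype.card_pos
  rw [palDist, randAccProb_uniformPushforward, Fintype.card_fun, Fintype.card_fin]
  by_cases hodd : Odd n
  · simp only [palAdviceVec_toList_of_odd hodd]
    have hcard := card_palAdvice_accepted_mul_card_le (G := G) (k := n / 2) hx
      (by obtain ⟨k, rfl⟩ := hodd; omega)
    rw [div_le_div_iff₀ (by positivity) hG, one_mul]
    exact_mod_cast hcard
  · simp only [palAdviceVec_toList_of_even hodd, ← hn]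
    rw [filter_false_of_mem fun r _ => palDFA_not_accepts_zip_replicate_none
      (Nat.not_odd_iff_even.1 (hn ▸ hodd))]
    simp

end PalAdvice

theorem stmt9 : InREGRn PalHash ∧
    ∃ (Γ : Type) (iΓ : Fintype Γ),
      letI := iΓ
      ∃ (Q : Type) (_ : Fintype Q) (M : DFA (Option Bool × Γ) Q)
        (D : (n : ℕ) → List.Vector Γ n → ℝ),
        (∀ n, IsDist (D n)) ∧
        ∀ (n : ℕ) (x : List (Option Bool)), x.length = n →
          (x ∈ PalHash → 3 / 4 ≤ randAccProb M.accepts (D n) x) ∧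
          (x ∉ PalHash → randAccProb M.accepts (D n) x ≤ 1 / 4) := by
  have hdist : ∀ n, IsDist (palDist (ZMod 4) n) := fun n => isDist_uniformPushforward _
  have hbounds : ∀ (n : ℕ) (x : List (Option Bool)), x.length = n →
      (x ∈ PalHash → 3 / 4 ≤ randAccProb (palDFA (ZMod 4)).accepts (palDist (ZMod 4) n) x) ∧
      (x ∉ PalHash → randAccProb (palDFA (ZMod 4)).accepts (palDist (ZMod 4) n) x ≤ 1 / 4) :=
    fun n x hn =>
      ⟨fun hx => by rw [randAccProb_palDist_of_mem hx hn]; norm_num,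
        fun hx => by simpa [ZMod.card] using randAccProb_palDist_le_of_not_mem (G := ZMod 4) hx hn⟩
  refine ⟨⟨_, inferInstance, _, inferInstance, palDFA (ZMod 4), 1 / 4, by norm_num, by norm_num,
    palDist (ZMod 4), hdist, fun n x hn => ?_⟩,
    ⟨_, inferInstance, _, inferInstance, palDFA (ZMod 4), palDist (ZMod 4), hdist, hbounds⟩⟩
  simpa only [show (1 : ℝ) - 1 / 4 = 3 / 4 by norm_num] using hbounds n x hn
end
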